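/- Let A₀, A₁ be m×m real matrices, β a length-m row vector with β · 1 = 1, and set s = 1 − A₁ 1 − A₀ 1 (a length-m column vector) and A₂ = s β (the rank-one outer product). If an m×m matrix R satisfies R (I − A₁ − A₀ 1 β) = A₀ (equivalently, R = A₀ (I − A₁ − A₀ 1 β)⁻¹ when that matrix is invertible), then R solves the QBD matrix-quadratic equation R = A₀ + R A₁ + R² A₂. -/
import Mathlib


open Matrix

lemma mul_vecMulVec' {m : ℕ} (M : Matrix (Fin m) (Fin m) ℝ) (s β : Fin m → ℝ) :
    M * Matrix.vecMulVec s β = Matrix.vecMulVec (M *ᵥ s) β := by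
  ext i j
  simp [Matrix.mul_apply, Matrix.vecMulVec_apply, Matrix.mulVec, dotProduct,
    Finset.sum_mul, mul_assoc]

lemma vecMulVec_mulVec' {m : ℕ} (s β v : Fin m → ℝ) :
    Matrix.vecMulVec s β *ᵥ v = (β ⬝ᵥ v) • s := by
  ext i
  simp [Matrix.mulVec, Matrix.vecMulVec_apply, dotProduct, Finset.mul_sum, mul_comm,
    mul_left_comm]

/-- **Rank-one simplification of the rate matrix `R`.** With `s = 1 - A₁ 1 - A₀ 1` and
`A₂ = s β` (rank-one outer product, `β` a row vector with `β ⬝ 1 = 1`), any matrix `R`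
satisfying `R (I - A₁ - A₀ 1 β) = A₀` solves the QBD matrix-quadratic equation
`R = A₀ + R A₁ + R² A₂`. -/
theorem rate_matrix_rank_one {m : ℕ} (A₀ A₁ R : Matrix (Fin m) (Fin m) ℝ)
    (β : Fin m → ℝ) (hβ : β ⬝ᵥ (fun _ => (1 : ℝ)) = 1)
    (s : Fin m → ℝ)
    (hs : s = (fun _ => (1 : ℝ)) - A₁ *ᵥ (fun _ => (1 : ℝ)) - A₀ *ᵥ (fun _ => (1 : ℝ)))
    (hR : R * (1 - A₁ - A₀ * Matrix.vecMulVec (fun _ => (1 : ℝ)) β) = A₀) :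
    R = A₀ + R * A₁ + R ^ 2 * Matrix.vecMulVec s β := by
  -- First: R *ᵥ s = A₀ *ᵥ 1
  have hRs : R *ᵥ s = A₀ *ᵥ (fun _ => (1 : ℝ)) := by
    have h := congrArg (fun M => M *ᵥ (fun _ => (1 : ℝ))) hR
    simp only [← Matrix.mulVec_mulVec] at h
    rw [Matrix.sub_mulVec, Matrix.sub_mulVec, Matrix.one_mulVec,
      ← Matrix.mulVec_mulVec, vecMulVec_mulVec', hβ, one_smul] at h
    rw [hs]
    convert h using 2
  have key : R ^ 2 * Matrix.vecMulVec s β = R * A₀ * Matrix.vecMulVec (fun _ => (1 : ℝ)) β := by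
    rw [pow_two, mul_assoc, mul_vecMulVec', hRs, mul_vecMulVec', Matrix.mulVec_mulVec, ← mul_vecMulVec']
  rw [key]
  have expand := hR
  rw [mul_sub, mul_sub, mul_one, ← mul_assoc] at expand
  rw [sub_eq_iff_eq_add, sub_eq_iff_eq_add] at expand
  exact expand.trans (by abel)
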